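/- arXiv:1203.0280 — 7 statements merged into one kernel-verified Lean document; each statement's English description precedes it below -/
import Mathlib

section
/- Let X be a compact topological space, φ a continuous flow on X, and f : X → ℝ continuous and positive. Let α_f : X × ℝ → ℝ be the function determined by κ_f(x, α_f(x, t)) = t for all x, t, where κ_f(x, t) = ∫₀ᵗ f(φ_s(x)) ds. Define ψ_t(x) = φ_{α_f(x, t)}(x). Then ψ = (ψ_t)_{t∈ℝ} is a flow on X: ψ_0 = id and ψ_{t+s} = ψ_t ∘ ψ_s for all s, t ∈ ℝ. -/
open MeasureTheory intervalIntegral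

/-!
The time change `κ_f(x, ·)` is strictly increasing because `f > 0`, and the flow law
`φ_{u+a} = φ_u ∘ φ_a` turns additivity of the integral into the cocycle identity
`κ_f(x, t + a) = κ_f(x, a) + κ_f(φ_a x, t)`. Applying `κ_f(x, ·)` to both sides of
`α_f(x, t + s) = α_f(ψ_s x, t) + α_f(x, s)` and using the cocycle identity with `a = α_f(x, s)`
gives `t + s` on each side, so this identity holds by injectivity, and it is exactly
`ψ_{t+s} = ψ_t ∘ ψ_s`.
-/

theorem strictMono_integral_of_pos {g : ℝ → ℝ}
    (hg : ∀ a b : ℝ, IntervalIntegrable g volume a b) (hpos : ∀ s, 0 < g s) :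
    StrictMono fun t => ∫ s in (0 : ℝ)..t, g s := by
  intro a b hab
  have hab_pos : 0 < ∫ s in a..b, g s := intervalIntegral_pos_of_pos (hg a b) hpos hab
  have hsplit := integral_add_adjacent_intervals (hg 0 a) (hg a b)
  simp only
  linarith

section TimeChange

variable {X : Type*} (φ : ℝ → X → X) (f : X → ℝ)

/-- The function `κ_f`. -/
noncomputable def timeChange (x : X) (t : ℝ) : ℝ :=
  ∫ s in (0 : ℝ)..t, f (φ s x)

variable {φ f}

theorem timeChange_zero (x : X) : timeChange φ f x 0 = 0 :=
  integral_same

theorem timeChange_add (hφadd : ∀ t s : ℝ, φ (t + s) = φ t ∘ φ s) {x : X}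
    (hint : ∀ a b : ℝ, IntervalIntegrable (fun s => f (φ s x)) volume a b) (a t : ℝ) :
    timeChange φ f x (t + a) = timeChange φ f x a + timeChange φ f (φ a x) t := by
  have hshift : timeChange φ f (φ a x) t = ∫ v in a..t + a, f (φ v x) := by
    simp only [timeChange, ← Function.comp_apply (f := φ _), ← hφadd]
    rw [integral_comp_add_right (fun v => f (φ v x)), zero_add]
  rw [hshift, timeChange, timeChange, integral_add_adjacent_intervals (hint 0 a) (hint a _)]

end TimeChange

theorem reparametrization_is_flow_general
    {X : Type*} [TopologicalSpace X]
    (φ : ℝ → X → X) (hφcont : Continuous fun p : ℝ × X => φ p.1 p.2)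
    (hφ0 : φ 0 = id) (hφadd : ∀ t s : ℝ, φ (t + s) = φ t ∘ φ s)
    (f : X → ℝ) (hf : Continuous f) (hfpos : ∀ x, 0 < f x)
    (α : X → ℝ → ℝ)
    (hα : ∀ (x : X) (t : ℝ), (∫ s in (0:ℝ)..(α x t), f (φ s x)) = t) :
    (fun x : X => φ (α x 0) x) = id ∧
    (∀ t s : ℝ, (fun x : X => φ (α x (t + s)) x) =
      (fun x : X => φ (α x t) x) ∘ (fun x : X => φ (α x s) x)) := by
  have hα' : ∀ x t, timeChange φ f x (α x t) = t := hα
  have hint : ∀ (x : X) (a b : ℝ), IntervalIntegrable (fun s => f (φ s x)) volume a b :=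
    fun x => (hf.comp (hφcont.comp (Continuous.prodMk_left x))).intervalIntegrable
  have hinj : ∀ x, Function.Injective (timeChange φ f x) :=
    fun x => (strictMono_integral_of_pos (hint x) fun _ => hfpos _).injective
  have hα_zero : ∀ x, α x 0 = 0 := fun x => hinj x (by rw [hα', timeChange_zero])
  have hα_add : ∀ x t s, α x (t + s) = α (φ (α x s) x) t + α x s := fun x t s =>
    hinj x (by rw [timeChange_add hφadd (hint x), hα', hα', hα', add_comm])
  refine ⟨funext fun x => by simp [hα_zero, hφ0], fun t s => funext fun x => ?_⟩
  simp only [Function.comp_apply, hα_add x t s, hφadd]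

/-- Let `φ` be a continuous flow on a compact space `X`, `f : X → ℝ` continuous
and positive, and `α_f` the function determined by `κ_f(x, α_f(x,t)) = t` where
`κ_f(x,t) = ∫₀ᵗ f(φ_s x) ds`. Then `ψ_t(x) = φ_{α_f(x,t)}(x)` is a flow:
`ψ_0 = id` and `ψ_{t+s} = ψ_t ∘ ψ_s`. -/
theorem reparametrization_is_flow
    {X : Type*} [TopologicalSpace X] [CompactSpace X]
    (φ : ℝ → X → X) (hφcont : Continuous fun p : ℝ × X => φ p.1 p.2)
    (hφ0 : φ 0 = id) (hφadd : ∀ t s : ℝ, φ (t + s) = φ t ∘ φ s)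
    (f : X → ℝ) (hf : Continuous f) (hfpos : ∀ x, 0 < f x)
    (α : X → ℝ → ℝ)
    (hα : ∀ (x : X) (t : ℝ), (∫ s in (0:ℝ)..(α x t), f (φ s x)) = t) :
    (fun x : X => φ (α x 0) x) = id ∧
    (∀ t s : ℝ, (fun x : X => φ (α x (t + s)) x) =
      (fun x : X => φ (α x t) x) ∘ (fun x : X => φ (α x s) x)) :=
  reparametrization_is_flow_general φ hφcont hφ0 hφadd f hf hfpos α hα
end

section
/- Let X be a compact metric space, φ a continuous flow on X, f : X → ℝ continuous and positive, and m a Borel probability measure on X invariant under φ_t for every t ∈ ℝ. Let m^# be the Borel probability measure with density f / (∫_X f dm) with respect to m. Then m^# is invariant under the reparametrized flow ψ^f_t for every t ∈ ℝ. -/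
/-!
For continuous `g`, integrate `(f · g ∘ ψ_t)(φ_s x)` over `s ∈ [0, T]`. Since
`ψ_t ∘ φ_s = ψ_{κ_f(x,s) + t}` on the orbit of `x`, the substitution `u = κ_f(x, s) + t` turns
it into the integral of `g (ψ_u x)` over the window `[t, κ_f(x,T) + t]`; for `f · g` the window
is `[0, κ_f(x,T)]`. Integrating over `m` and using the `φ`-invariance of `m`, the two windows
compute `T ∫ f · g ∘ ψ_t dm` and `T ∫ f · g dm`. The windows differ by two intervals of length
`|t|`, so `T (∫ f · g ∘ ψ_t dm - ∫ f · g dm)` stays bounded as `T → ∞`, which forces equality.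
-/

open MeasureTheory intervalIntegral Set
open scoped BoundedContinuousFunction

theorem eq_of_forall_abs_mul_sub_le {a b K : ℝ} (h : ∀ T : ℝ, |T * (a - b)| ≤ K) : a = b := by
  by_contra hne
  have hK := h ((K + 1) / (a - b))
  rw [div_mul_cancel₀ _ (sub_ne_zero.mpr hne)] at hK
  linarith [le_abs_self (K + 1)]

theorem norm_intervalIntegral_shift_sub_le {E : Type*} [NormedAddCommGroup E] [NormedSpace ℝ E]
    {G : ℝ → E} (hG : Continuous G) {C : ℝ} (hC : ∀ u, ‖G u‖ ≤ C) (K t : ℝ) :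
    ‖(∫ u in t..K + t, G u) - ∫ u in (0 : ℝ)..K, G u‖ ≤ 2 * C * |t| := by
  have hbound (a b : ℝ) : ‖∫ u in a..b, G u‖ ≤ C * |b - a| :=
    norm_integral_le_of_norm_le_const fun _ _ => hC _
  rw [integral_interval_sub_interval_comm (hG.intervalIntegrable _ _)
    (hG.intervalIntegrable _ _) (hG.intervalIntegrable _ _)]
  calc _ ≤ ‖∫ u in t..0, G u‖ + ‖∫ u in K + t..K, G u‖ := norm_sub_le _ _
    _ ≤ C * |t| + C * |t| := by
      gcongr
      · simpa using hbound t 0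
      · simpa using hbound (K + t) K
    _ = 2 * C * |t| := by ring

theorem Continuous.integrable_of_compactSpace {X : Type*} [TopologicalSpace X] [CompactSpace X]
    [MeasurableSpace X] [OpensMeasurableSpace X] {μ : Measure X} [IsFiniteMeasure μ]
    {h : X → ℝ} (hh : Continuous h) : Integrable h μ :=
  (BoundedContinuousFunction.mkOfCompact ⟨h, hh⟩).integrable μ

theorem continuous_uncurry_of_rightInverse {X : Type*} [TopologicalSpace X]
    {κ α : X → ℝ → ℝ} (hκ : ∀ x, StrictMono (κ x)) (hκc : ∀ t, Continuous fun x => κ x t)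
    (hα : ∀ x t, κ x (α x t) = t) : Continuous fun p : X × ℝ => α p.1 p.2 := by
  have hlt : ∀ x t b, b < α x t ↔ κ x b < t := fun x t b => by
    rw [← (hκ x).lt_iff_lt, hα]
  have hgt : ∀ x t b, α x t < b ↔ t < κ x b := fun x t b => by
    rw [← (hκ x).lt_iff_lt, hα]
  refine continuous_iff_continuousAt.mpr fun p =>
    tendsto_order.mpr ⟨fun b hb => ?_, fun b hb => ?_⟩
  · have hopen := isOpen_lt ((hκc b).comp continuous_fst) continuous_snd
    filter_upwards [hopen.mem_nhds ((hlt _ _ _).mp hb)] with q hq using (hlt _ _ _).mpr hq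
  · have hopen := isOpen_lt continuous_snd ((hκc b).comp continuous_fst)
    filter_upwards [hopen.mem_nhds ((hgt _ _ _).mp hb)] with q hq using (hgt _ _ _).mpr hq

section TimeChange

variable {X : Type*} [TopologicalSpace X] {φ : ℝ → X → X} {f : X → ℝ}

/-- `flowIntegral φ f x t` is `κ_f(x, t)`. -/
noncomputable def flowIntegral (φ : ℝ → X → X) (f : X → ℝ) (x : X) (t : ℝ) : ℝ :=
  ∫ s in (0 : ℝ)..t, f (φ s x)

variable (hφ : Continuous fun p : ℝ × X => φ p.1 p.2) (hf : Continuous f)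
include hφ hf

theorem hasDerivAt_flowIntegral (x : X) (s : ℝ) :
    HasDerivAt (flowIntegral φ f x) (f (φ s x)) s :=
  ((hf.comp (hφ.comp (Continuous.prodMk_left x))).integral_hasStrictDerivAt 0 s).hasDerivAt

theorem continuous_flowIntegral_apply (t : ℝ) : Continuous fun x => flowIntegral φ f x t :=
  continuous_parametric_intervalIntegral_of_continuous'
    (f := fun x s => f (φ s x)) (hf.comp (hφ.comp continuous_swap)) 0 t

theorem strictMono_flowIntegral (hfpos : ∀ x, 0 < f x) (x : X) :
    StrictMono (flowIntegral φ f x) :=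
  strictMono_of_hasDerivAt_pos (hasDerivAt_flowIntegral hφ hf x) fun _ => hfpos _

theorem flowIntegral_add (hφadd : ∀ t s : ℝ, φ (t + s) = φ t ∘ φ s) (x : X) (s t : ℝ) :
    flowIntegral φ f x (s + t) = flowIntegral φ f x s + flowIntegral φ f (φ s x) t := by
  have hfφ : Continuous fun u => f (φ u x) := hf.comp (hφ.comp (Continuous.prodMk_left x))
  have hshift : flowIntegral φ f (φ s x) t = ∫ u in s..s + t, f (φ u x) := by
    simp only [flowIntegral, ← Function.comp_apply (f := φ _), ← hφadd]
    rw [integral_comp_add_right (fun u => f (φ u x)), zero_add, add_comm]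
  rw [hshift, flowIntegral, flowIntegral, integral_add_adjacent_intervals
    (hfφ.intervalIntegrable _ _) (hfφ.intervalIntegrable _ _)]

theorem intervalIntegral_mul_comp_flowIntegral {h : ℝ → ℝ} (hh : Continuous h) (x : X)
    (T r : ℝ) :
    ∫ s in (0 : ℝ)..T, f (φ s x) * h (flowIntegral φ f x s + r) =
      ∫ u in r..flowIntegral φ f x T + r, h u := by
  have hfφ : Continuous fun u => f (φ u x) := hf.comp (hφ.comp (Continuous.prodMk_left x))
  have hsub := integral_comp_mul_deriv (a := 0) (b := T)
    (fun s _ => (hasDerivAt_flowIntegral hφ hf x s).add_const r) hfφ.continuousOn hh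
  simp only [Function.comp_def, flowIntegral, integral_same, zero_add] at hsub
  simpa only [mul_comm, flowIntegral] using hsub

end TimeChange

section Reparametrization

variable {X : Type*} [TopologicalSpace X] {φ : ℝ → X → X} {f : X → ℝ} {α : X → ℝ → ℝ}
  (hφ : Continuous fun p : ℝ × X => φ p.1 p.2) (hf : Continuous f) (hfpos : ∀ x, 0 < f x)
  (hα : ∀ x t, flowIntegral φ f x (α x t) = t)
include hφ hf hfpos hα

theorem alpha_flowIntegral (x : X) (s : ℝ) : α x (flowIntegral φ f x s) = s :=
  (strictMono_flowIntegral hφ hf hfpos x).injective (hα x _)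

theorem continuous_reparam : Continuous fun p : ℝ × X => φ (α p.2 p.1) p.2 :=
  have hα' := continuous_uncurry_of_rightInverse (strictMono_flowIntegral hφ hf hfpos)
    (continuous_flowIntegral_apply hφ hf) hα
  hφ.comp ((hα'.comp continuous_swap).prodMk continuous_snd)

theorem reparam_flow (hφadd : ∀ t s : ℝ, φ (t + s) = φ t ∘ φ s) (x : X) (s t : ℝ) :
    φ (α (φ s x) t) (φ s x) = φ (α x (flowIntegral φ f x s + t)) x := by
  have hcocycle : α x (flowIntegral φ f x s + t) = s + α (φ s x) t :=
    (strictMono_flowIntegral hφ hf hfpos x).injective <| by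
      rw [hα, flowIntegral_add hφ hf hφadd, hα]
  rw [hcocycle, add_comm, hφadd]
  rfl

end Reparametrization

section Invariant

variable {X : Type*} [TopologicalSpace X] [CompactSpace X] [MeasurableSpace X]
  [BorelSpace X] {φ : ℝ → X → X} {m : Measure X} [IsFiniteMeasure m]

theorem integral_intervalIntegral_comp_flow (hφ : Continuous fun p : ℝ × X => φ p.1 p.2)
    (hm : ∀ t, Measure.map (φ t) m = m) {H : X → ℝ} (hH : Continuous H) (T : ℝ) :
    ∫ x, (∫ s in (0 : ℝ)..T, H (φ s x)) ∂m = T * ∫ x, H x ∂m := by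
  obtain ⟨C, hC⟩ := isCompact_univ.exists_bound_of_continuousOn hH.continuousOn
  have : IsFiniteMeasure (volume.restrict (uIoc 0 T)) := Real.isFiniteMeasure_restrict_Ioc _ _
  have hint :
      Integrable (fun p : ℝ × X => H (φ p.1 p.2)) ((volume.restrict (uIoc 0 T)).prod m) :=
    Integrable.of_bound (hH.comp hφ).aestronglyMeasurable C
      (ae_of_all _ fun p => hC _ (mem_univ _))
  have hinv (s : ℝ) : ∫ x, H (φ s x) ∂m = ∫ x, H x ∂m := by
    conv_rhs => rw [← hm s]
    exact (integral_map (hφ.comp (Continuous.prodMk_right s)).aemeasurable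
      hH.aestronglyMeasurable).symm
  rw [← intervalIntegral_integral_swap hint]
  simp only [hinv, intervalIntegral.integral_const, sub_zero, smul_eq_mul]

theorem integral_mul_comp_reparam {f : X → ℝ} {α : X → ℝ → ℝ}
    (hφ : Continuous fun p : ℝ × X => φ p.1 p.2) (hφadd : ∀ t s : ℝ, φ (t + s) = φ t ∘ φ s)
    (hf : Continuous f) (hfpos : ∀ x, 0 < f x) (hm : ∀ t, Measure.map (φ t) m = m)
    (hα : ∀ x t, flowIntegral φ f x (α x t) = t) {g : X → ℝ} (hg : Continuous g) (t : ℝ) :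
    ∫ x, f x * g (φ (α x t) x) ∂m = ∫ x, f x * g x ∂m := by
  set κ := flowIntegral φ f
  have hψ := continuous_reparam hφ hf hfpos hα
  have hG (x : X) : Continuous fun u => g (φ (α x u) x) :=
    hg.comp (hψ.comp (Continuous.prodMk_left x))
  obtain ⟨C, hC⟩ := isCompact_univ.exists_bound_of_continuousOn hg.continuousOn
  have hshift (x : X) (T : ℝ) : ∫ s in (0 : ℝ)..T, f (φ s x) * g (φ (α (φ s x) t) (φ s x)) =
      ∫ u in t..κ x T + t, g (φ (α x u) x) := by
    simp only [reparam_flow hφ hf hfpos hα hφadd]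
    exact intervalIntegral_mul_comp_flowIntegral hφ hf (hG x) x T t
  have hid (x : X) (T : ℝ) : ∫ s in (0 : ℝ)..T, f (φ s x) * g (φ s x) =
      ∫ u in (0 : ℝ)..κ x T, g (φ (α x u) x) := by
    simpa only [add_zero, alpha_flowIntegral hφ hf hfpos hα] using
      intervalIntegral_mul_comp_flowIntegral hφ hf (hG x) x T 0
  refine eq_of_forall_abs_mul_sub_le (K := 2 * C * |t| * m.real univ) fun T => ?_
  have hintegrable {H : X → ℝ} (hH : Continuous H) :
      Integrable (fun x => ∫ s in (0 : ℝ)..T, H (φ s x)) m :=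
    (continuous_parametric_intervalIntegral_of_continuous' (f := fun x s => H (φ s x))
      (hH.comp (hφ.comp continuous_swap)) 0 T).integrable_of_compactSpace
  have hH₁ : Continuous fun y => f y * g (φ (α y t) y) :=
    hf.mul (hg.comp (hψ.comp (Continuous.prodMk_right t)))
  have hH₀ : Continuous fun y => f y * g y := hf.mul hg
  rw [mul_sub, ← integral_intervalIntegral_comp_flow hφ hm hH₁,
    ← integral_intervalIntegral_comp_flow hφ hm hH₀,
    ← MeasureTheory.integral_sub (hintegrable hH₁) (hintegrable hH₀), ← Real.norm_eq_abs]
  simp only [hshift, hid]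
  exact norm_integral_le_of_norm_le_const (ae_of_all _ fun x =>
    norm_intervalIntegral_shift_sub_le (hG x) (fun u => hC _ (mem_univ _)) (κ x T) t)

end Invariant

theorem map_withDensity_ofReal_eq_of_integral_mul_comp_eq {X : Type*} [TopologicalSpace X]
    [HasOuterApproxClosed X] [MeasurableSpace X] [BorelSpace X] {μ : Measure X} {ρ : X → ℝ}
    (hρ : Integrable ρ μ) (hρm : Measurable ρ) (hρ0 : ∀ x, 0 ≤ ρ x) {T : X → X}
    (hT : Measurable T) (h : ∀ g : X →ᵇ ℝ, ∫ x, ρ x * g (T x) ∂μ = ∫ x, ρ x * g x ∂μ) :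
    Measure.map T (μ.withDensity fun x => ENNReal.ofReal (ρ x)) =
      μ.withDensity fun x => ENNReal.ofReal (ρ x) := by
  have : IsFiniteMeasure (μ.withDensity fun x => ENNReal.ofReal (ρ x)) :=
    isFiniteMeasure_withDensity_ofReal hρ.hasFiniteIntegral
  refine ext_of_forall_integral_eq_of_IsFiniteMeasure fun g => ?_
  rw [integral_map hT.aemeasurable g.continuous.aestronglyMeasurable]
  simp only [integral_withDensity_eq_integral_toReal_smul hρm.ennreal_ofReal
    (ae_of_all _ fun _ => ENNReal.ofReal_lt_top), ENNReal.toReal_ofReal (hρ0 _), smul_eq_mul]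
  exact h g

theorem reparametrized_flow_invariant_measure_general
    {X : Type*} [MetricSpace X] [CompactSpace X] [MeasurableSpace X] [BorelSpace X]
    (φ : ℝ → X → X) (hφcont : Continuous fun p : ℝ × X => φ p.1 p.2)
    (hφadd : ∀ t s : ℝ, φ (t + s) = φ t ∘ φ s)
    (f : X → ℝ) (hf : Continuous f) (hfpos : ∀ x, 0 < f x)
    (m : Measure X) [IsProbabilityMeasure m]
    (hm : ∀ t : ℝ, Measure.map (φ t) m = m)
    (α : X → ℝ → ℝ)
    (hα : ∀ (x : X) (t : ℝ), (∫ s in (0:ℝ)..(α x t), f (φ s x)) = t) :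
    ∀ t : ℝ,
      Measure.map (fun x : X => φ (α x t) x)
        (m.withDensity fun x => ENNReal.ofReal (f x / ∫ y, f y ∂m)) =
      m.withDensity fun x => ENNReal.ofReal (f x / ∫ y, f y ∂m) := by
  intro t
  have hρ : Continuous fun x => f x / ∫ y, f y ∂m := hf.div_const _
  have hψ : Continuous fun x => φ (α x t) x :=
    (continuous_reparam hφcont hf hfpos hα).comp (Continuous.prodMk_right t)
  refine map_withDensity_ofReal_eq_of_integral_mul_comp_eq hρ.integrable_of_compactSpace
    hρ.measurable (fun x => div_nonneg (hfpos x).le (integral_nonneg fun y => (hfpos y).le))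
    hψ.measurable fun g => ?_
  simp only [div_mul_eq_mul_div, MeasureTheory.integral_div]
  rw [integral_mul_comp_reparam hφcont hφadd hf hfpos hm hα g.continuous t]

/-- Let `φ` be a continuous flow on a compact metric space `X`, `f : X → ℝ`
continuous positive, and `m` a `φ`-invariant Borel probability measure. Then the
probability measure `m^#` with density `f / ∫ f dm` with respect to `m` is
invariant under the reparametrized flow `ψ^f_t(x) = φ_{α_f(x,t)}(x)`. -/
theorem reparametrized_flow_invariant_measure
    {X : Type*} [MetricSpace X] [CompactSpace X] [MeasurableSpace X] [BorelSpace X]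
    (φ : ℝ → X → X) (hφcont : Continuous fun p : ℝ × X => φ p.1 p.2)
    (hφ0 : φ 0 = id) (hφadd : ∀ t s : ℝ, φ (t + s) = φ t ∘ φ s)
    (f : X → ℝ) (hf : Continuous f) (hfpos : ∀ x, 0 < f x)
    (m : Measure X) [IsProbabilityMeasure m]
    (hm : ∀ t : ℝ, Measure.map (φ t) m = m)
    (α : X → ℝ → ℝ)
    (hα : ∀ (x : X) (t : ℝ), (∫ s in (0:ℝ)..(α x t), f (φ s x)) = t) :
    ∀ t : ℝ,
      Measure.map (fun x : X => φ (α x t) x)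
        (m.withDensity fun x => ENNReal.ofReal (f x / ∫ y, f y ∂m)) =
      m.withDensity fun x => ENNReal.ofReal (f x / ∫ y, f y ∂m) :=
  reparametrized_flow_invariant_measure_general φ hφcont hφadd f hf hfpos m hm α hα
end

section
/- Let X be a compact metric space, φ a continuous flow on X, and f, g : X → ℝ continuous positive functions that are Livšic-cohomologous, i.e. there exists a continuous U : X → ℝ with ∫₀ᵗ f(φ_s(x)) ds − ∫₀ᵗ g(φ_s(x)) ds = U(φ_t(x)) − U(x) for all x ∈ X and t ∈ ℝ. Then the reparametrized flows ψ^f and ψ^g are conjugated: there exists a homeomorphism h : X → X such that h(ψ^f_t(x)) = ψ^g_t(h(x)) for all x ∈ X and t ∈ ℝ. -/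
open MeasureTheory intervalIntegral

/-!
Let `A(x)` be the time at which `∫₀^A g(φ_s x) ds = U(x)` and set `h(x) = φ_{A(x)}(x)`.
Measured in `g`-time from `x`, the point `h(φ_a x)` sits at `κ_g(x, a) + U(φ_a x)`, which by
the cohomology equation is `κ_f(x, a) + U(x)`: so `h` turns `f`-time into `g`-time shifted by
`U(x)`, which is exactly the conjugacy `h ∘ ψ^f_t = ψ^g_t ∘ h`. The map defined in the same way
from `f` and `-U` inverts `h`. Both maps are continuous because a time defined implicitly by a
strictly increasing function that depends continuously on `x` depends continuously on `x`.
-/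

/-- The paper's `κ_g(x, t)`. -/
noncomputable def orbitIntegral {X : Type*} (φ : ℝ → X → X) (g : X → ℝ) (x : X) (t : ℝ) : ℝ :=
  ∫ s in (0:ℝ)..t, g (φ s x)

theorem continuous_of_strictMono_of_apply_eq {X : Type*} [TopologicalSpace X]
    {F : X → ℝ → ℝ} (hF : ∀ t, Continuous fun x => F x t) (hmono : ∀ x, StrictMono (F x))
    {c A : X → ℝ} (hc : Continuous c) (hA : ∀ x, F x (A x) = c x) : Continuous A := by
  refine continuous_iff_continuousAt.2 fun x₀ => tendsto_order.2 ⟨fun a ha => ?_, fun b hb => ?_⟩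
  · have hlt : F x₀ a < c x₀ := hA x₀ ▸ hmono x₀ ha
    filter_upwards [(hF a).continuousAt.eventually_lt hc.continuousAt hlt] with x hx
    exact (hmono x).lt_iff_lt.1 (hA x ▸ hx)
  · have hlt : c x₀ < F x₀ b := hA x₀ ▸ hmono x₀ hb
    filter_upwards [hc.continuousAt.eventually_lt (hF b).continuousAt hlt] with x hx
    exact (hmono x).lt_iff_lt.1 (hA x ▸ hx)

@[simp]
theorem orbitIntegral_zero {X : Type*} (φ : ℝ → X → X) (g : X → ℝ) (x : X) :
    orbitIntegral φ g x 0 = 0 :=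
  integral_same

section OrbitIntegral

variable {X : Type*} [TopologicalSpace X] {φ : ℝ → X → X} {g : X → ℝ}

theorem continuous_orbitIntegral_left (hφ : Continuous fun p : ℝ × X => φ p.1 p.2)
    (hg : Continuous g) (t : ℝ) : Continuous fun x => orbitIntegral φ g x t :=
  continuous_parametric_intervalIntegral_of_continuous' (f := fun x s => g (φ s x))
    (hg.comp (hφ.comp (continuous_snd.prodMk continuous_fst))) 0 t

theorem strictMono_orbitIntegral (hφ : Continuous fun p : ℝ × X => φ p.1 p.2)
    (hg : Continuous g) (hgpos : ∀ x, 0 < g x) (x : X) : StrictMono (orbitIntegral φ g x) := by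
  intro a b hab
  have horbit : Continuous fun s => g (φ s x) := hg.comp (hφ.comp (Continuous.prodMk_left x))
  have hpos : 0 < ∫ s in a..b, g (φ s x) :=
    intervalIntegral_pos_of_pos (horbit.intervalIntegrable a b) (fun s => hgpos _) hab
  rw [← integral_interval_sub_left (horbit.intervalIntegrable 0 b)
    (horbit.intervalIntegrable 0 a)] at hpos
  exact sub_pos.1 hpos

theorem orbitIntegral_add (hφ : Continuous fun p : ℝ × X => φ p.1 p.2)
    (hφadd : ∀ t s : ℝ, φ (t + s) = φ t ∘ φ s) (hg : Continuous g) (x : X) (s r : ℝ) :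
    orbitIntegral φ g x (s + r) = orbitIntegral φ g x s + orbitIntegral φ g (φ s x) r := by
  have horbit : Continuous fun u => g (φ u x) := hg.comp (hφ.comp (Continuous.prodMk_left x))
  have hshift : orbitIntegral φ g (φ s x) r = ∫ u in s..s + r, g (φ u x) := by
    simp only [orbitIntegral, ← Function.comp_apply (f := φ _), ← hφadd,
      integral_comp_add_right (fun u => g (φ u x)), zero_add, add_comm r s]
  rw [hshift, orbitIntegral, orbitIntegral,
    integral_add_adjacent_intervals (horbit.intervalIntegrable 0 s)
      (horbit.intervalIntegrable s (s + r))]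

variable {α : X → ℝ → ℝ} (hα : ∀ x t, orbitIntegral φ g x (α x t) = t)
include hα

theorem flow_inverseTime_flow_eq (hφ : Continuous fun p : ℝ × X => φ p.1 p.2)
    (hφadd : ∀ t s : ℝ, φ (t + s) = φ t ∘ φ s) (hg : Continuous g) (hgpos : ∀ x, 0 < g x)
    {x : X} {a c τ : ℝ} (hτ : orbitIntegral φ g x τ = orbitIntegral φ g x a + c) :
    φ (α (φ a x) c) (φ a x) = φ τ x := by
  have htime : α (φ a x) c + a = τ := (strictMono_orbitIntegral hφ hg hgpos x).injective <| by
    rw [add_comm, orbitIntegral_add hφ hφadd hg, hα, hτ]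
  rw [← htime, hφadd]
  rfl

theorem continuous_flow_inverseTime (hφ : Continuous fun p : ℝ × X => φ p.1 p.2)
    (hg : Continuous g) (hgpos : ∀ x, 0 < g x) {c : X → ℝ} (hc : Continuous c) :
    Continuous fun x => φ (α x (c x)) x := by
  have htime : Continuous fun x => α x (c x) :=
    continuous_of_strictMono_of_apply_eq (continuous_orbitIntegral_left hφ hg)
      (strictMono_orbitIntegral hφ hg hgpos) hc fun x => hα x (c x)
  exact hφ.comp (htime.prodMk continuous_id)

end OrbitIntegral

theorem livsic_cohomologous_reparametrizations_conjugated_general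
    {X : Type*} [MetricSpace X]
    (φ : ℝ → X → X) (hφcont : Continuous fun p : ℝ × X => φ p.1 p.2)
    (hφ0 : φ 0 = id) (hφadd : ∀ t s : ℝ, φ (t + s) = φ t ∘ φ s)
    (f g : X → ℝ) (hf : Continuous f) (hg : Continuous g)
    (hfpos : ∀ x, 0 < f x) (hgpos : ∀ x, 0 < g x)
    (U : X → ℝ) (hU : Continuous U)
    (hcoh : ∀ (x : X) (t : ℝ),
      (∫ s in (0:ℝ)..t, f (φ s x)) - (∫ s in (0:ℝ)..t, g (φ s x)) = U (φ t x) - U x)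
    (αf αg : X → ℝ → ℝ)
    (hαf : ∀ (x : X) (t : ℝ), (∫ s in (0:ℝ)..(αf x t), f (φ s x)) = t)
    (hαg : ∀ (x : X) (t : ℝ), (∫ s in (0:ℝ)..(αg x t), g (φ s x)) = t) :
    ∃ h : X ≃ₜ X, ∀ (x : X) (t : ℝ),
      h (φ (αf x t) x) = φ (αg (h x) t) (h x) := by
  have hκ (x : X) (t : ℝ) : orbitIntegral φ f x t = orbitIntegral φ g x t + U (φ t x) - U x := by
    rw [orbitIntegral, orbitIntegral]
    linarith [hcoh x t]
  have hφ0x (x : X) : φ 0 x = x := congrFun hφ0 x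
  replace hαf : ∀ x t, orbitIntegral φ f x (αf x t) = t := hαf
  replace hαg : ∀ x t, orbitIntegral φ g x (αg x t) = t := hαg
  let h : X ≃ₜ X :=
    { toFun := fun x => φ (αg x (U x)) x
      invFun := fun x => φ (αf x (-U x)) x
      left_inv := fun x =>
        (flow_inverseTime_flow_eq hαf hφcont hφadd hf hfpos (τ := 0) <| by
          linarith [orbitIntegral_zero φ f x, hκ x (αg x (U x)), hαg x (U x)]).trans (hφ0x x)
      right_inv := fun x =>
        (flow_inverseTime_flow_eq hαg hφcont hφadd hg hgpos (τ := 0) <| by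
          linarith [orbitIntegral_zero φ g x, hκ x (αf x (-U x)), hαf x (-U x)]).trans (hφ0x x)
      continuous_toFun := continuous_flow_inverseTime hαg hφcont hg hgpos hU
      continuous_invFun := continuous_flow_inverseTime hαf hφcont hf hfpos hU.neg }
  refine ⟨h, fun x t => ?_⟩
  refine (flow_inverseTime_flow_eq hαg hφcont hφadd hg hgpos
    (τ := αg x (U x) + αg (φ (αg x (U x)) x) t) ?_).trans (by rw [add_comm, hφadd]; rfl)
  rw [orbitIntegral_add hφcont hφadd hg, hαg, hαg]
  linarith [hαf x t, hκ x (αf x t)]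

/-- If two continuous positive functions `f, g` on a compact metric space with a
continuous flow `φ` are Livšic-cohomologous, i.e. `κ_f(x,t) − κ_g(x,t) =
U(φ_t x) − U(x)` for a continuous `U`, then the reparametrized flows `ψ^f` and
`ψ^g` are conjugated by a homeomorphism `h`: `h(ψ^f_t x) = ψ^g_t (h x)`. -/
theorem livsic_cohomologous_reparametrizations_conjugated
    {X : Type*} [MetricSpace X] [CompactSpace X]
    (φ : ℝ → X → X) (hφcont : Continuous fun p : ℝ × X => φ p.1 p.2)
    (hφ0 : φ 0 = id) (hφadd : ∀ t s : ℝ, φ (t + s) = φ t ∘ φ s)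
    (f g : X → ℝ) (hf : Continuous f) (hg : Continuous g)
    (hfpos : ∀ x, 0 < f x) (hgpos : ∀ x, 0 < g x)
    (U : X → ℝ) (hU : Continuous U)
    (hcoh : ∀ (x : X) (t : ℝ),
      (∫ s in (0:ℝ)..t, f (φ s x)) - (∫ s in (0:ℝ)..t, g (φ s x)) = U (φ t x) - U x)
    (αf αg : X → ℝ → ℝ)
    (hαf : ∀ (x : X) (t : ℝ), (∫ s in (0:ℝ)..(αf x t), f (φ s x)) = t)
    (hαg : ∀ (x : X) (t : ℝ), (∫ s in (0:ℝ)..(αg x t), g (φ s x)) = t) :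
    ∃ h : X ≃ₜ X, ∀ (x : X) (t : ℝ),
      h (φ (αf x t) x) = φ (αg (h x) t) (h x) :=
  livsic_cohomologous_reparametrizations_conjugated_general φ hφcont hφ0 hφadd f g hf hg hfpos hgpos
    U hU hcoh αf αg hαf hαg
end

section
/- Let X be a set, φ a flow on X, V a finite-dimensional real normed vector space, and κ : X × ℝ → V a map satisfying κ(x, t + s) = κ(φ_s(x), t) + κ(x, s) for all x, s, t, such that t ↦ κ(x, t) is continuous for each x. Fix C > 0 and define κ^C(x, t) = (1/C) ∫₀^C κ(φ_s(x), t) ds. Then: (i) κ^C(x, t) = (1/C)(∫_t^{t+C} κ(x, r) dr − ∫₀^C κ(x, r) dr); (ii) κ^C satisfies the same translation-cocycle identity κ^C(x, t + s) = κ^C(φ_s(x), t) + κ^C(x, s); (iii) for each x the map t ↦ κ^C(x, t) is differentiable with derivative (κ(x, t + C) − κ(x, t))/C; (iv) if φ_p(x) = x then κ^C(x, p) = κ(x, p), so κ^C has the same periods as κ. -/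
/-!
The cocycle identity gives `κ (φ s x) t = κ x (t + s) - κ x s`, so every statement reduces to
the single continuous function `κ x`: (i) is a change of variables, (iii) is the fundamental
theorem of calculus for `τ ↦ ∫ r in τ..τ + C, κ x r`, and at a periodic point `κ x` is
quasi-periodic, `κ x (r + p) = κ x r + κ x p`, which gives (iv). For (ii), integrate the
cocycle identity at `φ u x` over `u`; applying the same formula twice shows
`κ (φ u (φ s x)) = κ (φ s (φ u x))`.
-/

open MeasureTheory intervalIntegral

def IsTranslationCocycle {X V : Type*} [AddGroup V] (φ : ℝ → X → X) (κ : X → ℝ → V) : Prop :=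
  ∀ (x : X) (s t : ℝ), κ x (t + s) = κ (φ s x) t + κ x s

noncomputable def cocycleAverage {X V : Type*} [NormedAddCommGroup V] [NormedSpace ℝ V]
    (φ : ℝ → X → X) (κ : X → ℝ → V) (C : ℝ) (x : X) (t : ℝ) : V :=
  (1 / C) • ∫ s in (0:ℝ)..C, κ (φ s x) t

section

variable {V : Type*} [NormedAddCommGroup V] [NormedSpace ℝ V] {f : ℝ → V} {C : ℝ}

theorem Continuous.hasDerivAt_integral_add_const [CompleteSpace V] (hf : Continuous f) (t : ℝ) :
    HasDerivAt (fun τ ↦ ∫ r in τ..τ + C, f r) (f (t + C) - f t) t := by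
  have hupper : HasDerivAt (fun τ ↦ ∫ r in (0:ℝ)..τ + C, f r) (f (t + C)) t := by
    simpa using (hf.integral_hasStrictDerivAt 0 (t + C)).hasDerivAt.comp_add_const t C
  have hlower := (hf.integral_hasStrictDerivAt 0 t).hasDerivAt
  refine (hupper.sub hlower).congr_of_eventuallyEq (Filter.Eventually.of_forall fun τ ↦ ?_)
  exact (integral_interval_sub_left (hf.intervalIntegrable _ _) (hf.intervalIntegrable _ _)).symm

theorem integral_add_eq_add_smul_of_forall_add_eq [CompleteSpace V] {p : ℝ} {c : V}
    (hf : ∀ r, f (r + p) = f r + c) (hint : IntervalIntegrable f volume 0 C) :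
    ∫ r in p..p + C, f r = (∫ r in (0:ℝ)..C, f r) + C • c := by
  have hshift := integral_comp_add_right f p (a := 0) (b := C)
  rw [zero_add, add_comm C] at hshift
  rw [← hshift, funext hf,
    integral_add hint intervalIntegrable_const, intervalIntegral.integral_const, sub_zero]

end

namespace IsTranslationCocycle

variable {X V : Type*} [NormedAddCommGroup V] {φ : ℝ → X → X} {κ : X → ℝ → V}

theorem apply_flow (hκ : IsTranslationCocycle φ κ) (x : X) (s t : ℝ) :
    κ (φ s x) t = κ x (t + s) - κ x s :=
  eq_sub_of_add_eq (hκ x s t).symm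

theorem apply_flow_comm (hκ : IsTranslationCocycle φ κ) (x : X) (u s t : ℝ) :
    κ (φ u (φ s x)) t = κ (φ s (φ u x)) t := by
  simp only [hκ.apply_flow]
  abel_nf

theorem continuous_apply_flow (hκ : IsTranslationCocycle φ κ) {x : X} (hcont : Continuous (κ x))
    (t : ℝ) : Continuous fun s ↦ κ (φ s x) t := by
  simp only [hκ.apply_flow]
  fun_prop

variable [NormedSpace ℝ V] {C : ℝ}

theorem integral_apply_flow (hκ : IsTranslationCocycle φ κ) {x : X} (hcont : Continuous (κ x))
    (t : ℝ) :
    ∫ s in (0:ℝ)..C, κ (φ s x) t = (∫ r in t..t + C, κ x r) - ∫ r in (0:ℝ)..C, κ x r := by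
  simp only [hκ.apply_flow]
  have hshift : IntervalIntegrable (fun s ↦ κ x (t + s)) volume 0 C :=
    (hcont.comp (continuous_const_add t)).intervalIntegrable _ _
  rw [integral_sub hshift (hcont.intervalIntegrable _ _), integral_comp_add_left, add_zero]

theorem cocycleAverage_eq (hκ : IsTranslationCocycle φ κ) {x : X} (hcont : Continuous (κ x))
    (t : ℝ) : cocycleAverage φ κ C x t =
      (1 / C) • ((∫ r in t..t + C, κ x r) - ∫ r in (0:ℝ)..C, κ x r) := by
  rw [cocycleAverage, hκ.integral_apply_flow hcont]

theorem isTranslationCocycle_cocycleAverage (hκ : IsTranslationCocycle φ κ)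
    (hcont : ∀ x, Continuous (κ x)) :
    IsTranslationCocycle φ (cocycleAverage φ κ C) := by
  intro x s t
  simp only [cocycleAverage, ← smul_add]
  rw [← integral_add ((hκ.continuous_apply_flow (hcont _) t).intervalIntegrable _ _)
    ((hκ.continuous_apply_flow (hcont _) s).intervalIntegrable _ _)]
  simp only [hκ _ s t, hκ.apply_flow_comm]

theorem hasDerivAt_cocycleAverage [CompleteSpace V] (hκ : IsTranslationCocycle φ κ) {x : X}
    (hcont : Continuous (κ x)) (t : ℝ) :
    HasDerivAt (cocycleAverage φ κ C x) ((1 / C) • (κ x (t + C) - κ x t)) t := by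
  simp only [funext (hκ.cocycleAverage_eq hcont)]
  exact ((hcont.hasDerivAt_integral_add_const t).sub_const _).const_smul (1 / C)

theorem cocycleAverage_of_flow_eq_self [CompleteSpace V] (hκ : IsTranslationCocycle φ κ) {x : X}
    (hcont : Continuous (κ x)) (hC : C ≠ 0) {p : ℝ} (hp : φ p x = x) :
    cocycleAverage φ κ C x p = κ x p := by
  have hquasi : ∀ r, κ x (r + p) = κ x r + κ x p := fun r ↦ by rw [hκ x p r, hp]
  rw [hκ.cocycleAverage_eq hcont, integral_add_eq_add_smul_of_forall_add_eq hquasi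
    (hcont.intervalIntegrable _ _), add_sub_cancel_left, smul_smul, one_div,
    inv_mul_cancel₀ hC, one_smul]

end IsTranslationCocycle

theorem averaged_translation_cocycle_properties_general
    {X V : Type*}
    [NormedAddCommGroup V] [NormedSpace ℝ V] [FiniteDimensional ℝ V]
    (φ : ℝ → X → X)
    (κ : X → ℝ → V)
    (hκ : ∀ (x : X) (s t : ℝ), κ x (t + s) = κ (φ s x) t + κ x s)
    (hκcont : ∀ x : X, Continuous (κ x))
    (C : ℝ) (hC : 0 < C)
    (κC : X → ℝ → V)
    (hκC : ∀ (x : X) (t : ℝ), κC x t = (1 / C) • ∫ s in (0:ℝ)..C, κ (φ s x) t) :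
    (∀ (x : X) (t : ℝ), κC x t =
        (1 / C) • ((∫ r in t..(t + C), κ x r) - ∫ r in (0:ℝ)..C, κ x r)) ∧
    (∀ (x : X) (s t : ℝ), κC x (t + s) = κC (φ s x) t + κC x s) ∧
    (∀ (x : X) (t : ℝ),
        HasDerivAt (fun τ : ℝ => κC x τ) ((1 / C) • (κ x (t + C) - κ x t)) t) ∧
    (∀ (x : X) (p : ℝ), φ p x = x → κC x p = κ x p) := by
  obtain rfl : κC = cocycleAverage φ κ C := funext₂ hκC
  have hκ' : IsTranslationCocycle φ κ := hκ
  exact ⟨fun x ↦ hκ'.cocycleAverage_eq (hκcont x),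
    hκ'.isTranslationCocycle_cocycleAverage hκcont,
    fun x ↦ hκ'.hasDerivAt_cocycleAverage (hκcont x),
    fun x _ ↦ hκ'.cocycleAverage_of_flow_eq_self (hκcont x) hC.ne'⟩

/-- Given a translation cocycle `κ` over a flow `φ`, continuous in `t`, and `C > 0`,
the average `κ^C(x,t) = (1/C) ∫₀^C κ(φ_s x, t) ds` satisfies:
(i) `κ^C(x,t) = (1/C)(∫_t^{t+C} κ(x,r) dr − ∫₀^C κ(x,r) dr)`;
(ii) the translation-cocycle identity;
(iii) `t ↦ κ^C(x,t)` is differentiable with derivative `(κ(x,t+C) − κ(x,t))/C`;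
(iv) `κ^C` has the same periods as `κ`. -/
theorem averaged_translation_cocycle_properties
    {X V : Type*}
    [NormedAddCommGroup V] [NormedSpace ℝ V] [FiniteDimensional ℝ V]
    (φ : ℝ → X → X) (hφ0 : φ 0 = id) (hφadd : ∀ t s : ℝ, φ (t + s) = φ t ∘ φ s)
    (κ : X → ℝ → V)
    (hκ : ∀ (x : X) (s t : ℝ), κ x (t + s) = κ (φ s x) t + κ x s)
    (hκcont : ∀ x : X, Continuous (κ x))
    (C : ℝ) (hC : 0 < C)
    (κC : X → ℝ → V)
    (hκC : ∀ (x : X) (t : ℝ), κC x t = (1 / C) • ∫ s in (0:ℝ)..C, κ (φ s x) t) :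
    (∀ (x : X) (t : ℝ), κC x t =
        (1 / C) • ((∫ r in t..(t + C), κ x r) - ∫ r in (0:ℝ)..C, κ x r)) ∧
    (∀ (x : X) (s t : ℝ), κC x (t + s) = κC (φ s x) t + κC x s) ∧
    (∀ (x : X) (t : ℝ),
        HasDerivAt (fun τ : ℝ => κC x τ) ((1 / C) • (κ x (t + C) - κ x t)) t) ∧
    (∀ (x : X) (p : ℝ), φ p x = x → κC x p = κ x p) :=
  averaged_translation_cocycle_properties_general φ κ hκ hκcont C hC κC hκC
end

section
/- Let E be a finite-dimensional real inner product space and C ⊆ E a closed convex cone containing no line, i.e. C ∩ (−C) ⊆ {0}. Then the dual cone C* = {z ∈ E : ⟪z, x⟫ ≥ 0 for all x ∈ C} has nonempty topological interior. -/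
/-!
If the dual cone `C*` had empty interior, the convex set `C*` would lie in a hyperplane `vᗮ`
with `v ≠ 0`. Then both `v` and `-v` pair nonnegatively with `C*`, so by the bipolar theorem
`C** = C` (Farkas' lemma) both lie in `C`, contradicting salience.
-/

open scoped RealInnerProductSpace

theorem Convex.add_mem_of_forall_smul_mem {𝕜 M : Type*} [Field 𝕜] [LinearOrder 𝕜]
    [IsStrictOrderedRing 𝕜] [AddCommGroup M] [Module 𝕜 M] {s : Set M} (hs : Convex 𝕜 s)
    (hsmul : ∀ x ∈ s, ∀ t : 𝕜, 0 < t → t • x ∈ s) {x y : M} (hx : x ∈ s) (hy : y ∈ s) :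
    x + y ∈ s := by
  have hmid := hs hx hy (a := 2⁻¹) (b := 2⁻¹) (by norm_num) (by norm_num) (by norm_num)
  simpa [← smul_add, smul_smul] using hsmul _ hmid 2 two_pos

section InnerProductSpace

variable {E : Type*} [NormedAddCommGroup E] [InnerProductSpace ℝ E] [FiniteDimensional ℝ E]

theorem Convex.exists_ne_zero_forall_inner_eq_zero {s : Set E} (hs : Convex ℝ s)
    (h0 : (0 : E) ∈ s) (hint : interior s = ∅) : ∃ v ≠ 0, ∀ z ∈ s, ⟪z, v⟫ = 0 := by
  have hspan : Submodule.span ℝ s ≠ ⊤ := by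
    intro h
    have : affineSpan ℝ s = ⊤ := by
      rw [AffineSubspace.affineSpan_eq_top_iff_vectorSpan_eq_top_of_nonempty ℝ E E ⟨0, h0⟩,
        vectorSpan_eq_span_vsub_set_right ℝ h0]
      simpa using h
    exact (hs.interior_nonempty_iff_affineSpan_eq_top.2 this).ne_empty hint
  obtain ⟨v, hv, hv0⟩ := (Submodule.ne_bot_iff _).1 (mt Submodule.orthogonal_eq_bot_iff.1 hspan)
  exact ⟨v, hv0, fun z hz => Submodule.inner_right_of_mem_orthogonal (Submodule.subset_span hz) hv⟩

namespace ProperCone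

theorem interior_innerDual_nonempty (C : ProperCone ℝ E) (hC : (C : Set E) ∩ -C ⊆ {0}) :
    (interior (innerDual (C : Set E) : Set E)).Nonempty := by
  rw [Set.nonempty_iff_ne_empty]
  intro hint
  obtain ⟨v, hv0, hv⟩ := (innerDual (C : Set E)).convex.exists_ne_zero_forall_inner_eq_zero
    (innerDual _).zero_mem hint
  have hmem : ∀ w : E, (∀ z ∈ innerDual (C : Set E), ⟪z, w⟫ = 0) → w ∈ C := fun w hw => by
    rw [← innerDual_innerDual C]
    exact fun z hz => (hw z hz).ge
  exact hv0 (hC ⟨hmem v hv, hmem (-v) (by simpa [inner_neg_right] using hv)⟩)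

end ProperCone

end InnerProductSpace

/-- If `C` is a closed convex cone containing no line (`C ∩ (−C) ⊆ {0}`) in a
finite-dimensional real inner product space, then the dual cone
`{z : ⟪z, x⟫ ≥ 0 for all x ∈ C}` has nonempty topological interior. -/
theorem dualCone_interior_nonempty_of_salient
    {E : Type*} [NormedAddCommGroup E] [InnerProductSpace ℝ E]
    [FiniteDimensional ℝ E]
    (C : Set E) (hCclosed : IsClosed C) (hCconv : Convex ℝ C)
    (hCcone : ∀ x ∈ C, ∀ t : ℝ, 0 < t → t • x ∈ C)
    (hsalient : C ∩ (-C) ⊆ {0}) :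
    (interior {z : E | ∀ x ∈ C, 0 ≤ ⟪z, x⟫}).Nonempty := by
  rcases C.eq_empty_or_nonempty with rfl | hne
  · simp
  let K : ConvexCone ℝ E :=
    ⟨C, fun _ ht x hx => hCcone x hx _ ht,
      fun _ hx _ hy => hCconv.add_mem_of_forall_smul_mem hCcone hx hy⟩
  lift K to ProperCone ℝ E using ⟨hne, hCclosed⟩ with P hP
  have hPC : (P : Set E) = C := congrArg SetLike.coe hP
  convert P.interior_innerDual_nonempty (hPC ▸ hsalient) using 2
  ext z
  simp [hPC, real_inner_comm]
end

section
/- For every θ₀ ∈ (0, π/2) there exists κ > 0 such that for all real numbers a ≥ 0, T > 0 and t > 0 satisfying a ≤ t·(tan θ₀)² and t² + a·t ≤ T², one has R(T, a) ≤ T − κ·a/2, where R(T, a) = (√(a² + 4T²) − a)/2. (One may take κ = cos θ₀.) -/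
/-! Write `c = cos θ₀` and `s = sin θ₀`. The angle condition says `a c² ≤ t s²`, and then
`(T s²)² ≥ (t² + a t) s⁴ ≥ (a c²)² + a² c² s² = (a c)²`, so `a c ≤ T s² = T (1 - c²)`.
This is what makes `(2T + (1 - c) a)² ≥ a² + 4T²`, i.e. `√(a² + 4T²) ≤ 2T + (1 - c) a`,
which is the claim with `κ = c`. -/

open Real

lemma mul_cos_sq_le_of_le_mul_tan_sq {θ a t : ℝ} (hcos : 0 < cos θ)
    (h : a ≤ t * tan θ ^ 2) : a * cos θ ^ 2 ≤ t * sin θ ^ 2 := by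
  rwa [tan_eq_sin_div_cos, div_pow, mul_div_assoc', le_div_iff₀ (by positivity)] at h

lemma mul_cos_le_mul_sin_sq {θ a t T : ℝ} (ha : 0 ≤ a) (hT : 0 ≤ T)
    (hangle : a * cos θ ^ 2 ≤ t * sin θ ^ 2) (h : t ^ 2 + a * t ≤ T ^ 2) :
    a * cos θ ≤ T * sin θ ^ 2 := by
  have hsq : (a * cos θ) ^ 2 ≤ (T * sin θ ^ 2) ^ 2 :=
    calc (a * cos θ) ^ 2 = (a * cos θ ^ 2) ^ 2 + a * (a * cos θ ^ 2) * sin θ ^ 2 := by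
          linear_combination -(a * cos θ) ^ 2 * sin_sq_add_cos_sq θ
      _ ≤ (t * sin θ ^ 2) ^ 2 + a * (t * sin θ ^ 2) * sin θ ^ 2 := by gcongr
      _ = (t ^ 2 + a * t) * (sin θ ^ 2) ^ 2 := by ring
      _ ≤ T ^ 2 * (sin θ ^ 2) ^ 2 := by gcongr
      _ = (T * sin θ ^ 2) ^ 2 := by ring
  exact le_of_sq_le_sq hsq (by positivity)

lemma sqrt_sq_add_four_mul_sq_le {a T c : ℝ} (ha : 0 ≤ a) (hT : 0 ≤ T) (hc : c ≤ 1)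
    (h : a * c ≤ T * (1 - c ^ 2)) : √(a ^ 2 + 4 * T ^ 2) ≤ 2 * T + (1 - c) * a := by
  have hnonneg : 0 ≤ 2 * T + (1 - c) * a := by nlinarith
  refine sqrt_le_iff.mpr ⟨hnonneg, ?_⟩
  -- the difference of the two sides is `a (4 (1 - c) T - c (2 - c) a)`
  have hfactor : c * (2 - c) * a ≤ 4 * (1 - c) * T := by
    have h2 : (2 - c) * (a * c) ≤ (2 - c) * (T * (1 - c ^ 2)) :=
      mul_le_mul_of_nonneg_left h (by linarith)
    nlinarith [mul_nonneg (mul_nonneg (sub_nonneg.mpr hc) hT) (sq_nonneg (c - 1 / 2))]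
  nlinarith [mul_le_mul_of_nonneg_left hfactor ha]

/-- For every `θ₀ ∈ (0, π/2)` there exists `κ > 0` such that for all `a ≥ 0`,
`T > 0`, `t > 0` with `a ≤ t·(tan θ₀)²` and `t² + a·t ≤ T²`, one has
`R(T,a) ≤ T − κ·a/2`, where `R(T,a) = (√(a² + 4T²) − a)/2`. -/
theorem R_le_T_sub_kappa
    (θ₀ : ℝ) (hθ₀ : θ₀ ∈ Set.Ioo 0 (Real.pi / 2)) :
    ∃ κ : ℝ, 0 < κ ∧ ∀ a T t : ℝ, 0 ≤ a → 0 < T → 0 < t →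
      a ≤ t * Real.tan θ₀ ^ 2 → t ^ 2 + a * t ≤ T ^ 2 →
      (Real.sqrt (a ^ 2 + 4 * T ^ 2) - a) / 2 ≤ T - κ * a / 2 := by
  have hcos : 0 < cos θ₀ := cos_pos_of_mem_Ioo ⟨by linarith [pi_pos, hθ₀.1], hθ₀.2⟩
  refine ⟨cos θ₀, hcos, fun a T t ha hT _ hangle hT' => ?_⟩
  have key : a * cos θ₀ ≤ T * (1 - cos θ₀ ^ 2) := by
    rw [← sin_sq]
    exact mul_cos_le_mul_sin_sq ha hT.le (mul_cos_sq_le_of_le_mul_tan_sq hcos hangle) hT'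
  linarith [sqrt_sq_add_four_mul_sq_le ha hT.le (cos_le_one θ₀) key]
end

section
/- Let Y be a topological space, ψ a continuous flow on Y, V a finite-dimensional real normed vector space, Σ a type, σ : Σ → Σ, π : Σ → Y, and r : Σ → ℝ, satisfying ψ_{t − r(x)}(π(σ(x))) = ψ_t(π(x)) for every x ∈ Σ and t ∈ ℝ. Let f : Y → V be continuous, φ : V → ℝ linear with φ(f(y)) = 0 for all y ∈ Y, and u ∈ V with φ(u) = 1. Define K(x) = r(x)·u + ∫₀^{r(x)} f(ψ_s(π(x))) ds and the map π̲ : Σ × V → Y × V by π̲(x, v) = (ψ_{φ(v)}(π(x)), v − φ(v)·u − ∫₀^{φ(v)} f(ψ_s(π(x))) ds). Then π̲ is invariant under the map (x, v) ↦ (σ(x), v − K(x)): for all (x, v) ∈ Σ × V one has π̲(σ(x), v − K(x)) = π̲(x, v). -/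
open MeasureTheory intervalIntegral

/-!
Write `I(y, t) = ∫₀^t f(ψ_s y) ds`. The Markov relation says that the orbit of `π(σ x)` is the
orbit of `π x` shifted in time by `r(x)`, so `I(π(σ x), t - r(x)) = I(π x, t) - I(π x, r(x))`.
Since `φ ∘ f = 0`, also `φ(K x) = r(x)`, so subtracting `K x` from `v` lowers the time `φ(v)` by
exactly `r(x)`; the two shifts cancel in both components of `π̲`.
-/

section

variable {V : Type*} [NormedAddCommGroup V] [NormedSpace ℝ V]

theorem intervalIntegral_zero_sub_comp_add_right {g : ℝ → V}
    (hg : ∀ a b : ℝ, IntervalIntegrable g volume a b) (c t : ℝ) :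
    ∫ s in (0 : ℝ)..t - c, g (s + c) = (∫ s in (0 : ℝ)..t, g s) - ∫ s in (0 : ℝ)..c, g s := by
  rw [intervalIntegral.integral_comp_add_right, zero_add, sub_add_cancel,
    intervalIntegral.integral_interval_sub_left (hg _ _) (hg _ _)]

theorem LinearMap.map_intervalIntegral_eq_zero [FiniteDimensional ℝ V] (φ : V →ₗ[ℝ] ℝ)
    {g : ℝ → V} (hg : ∀ s, φ (g s) = 0) (a b : ℝ) : φ (∫ s in a..b, g s) = 0 := by
  by_cases hint : IntervalIntegrable g volume a b
  · have hcomm := (LinearMap.toContinuousLinearMap φ).intervalIntegral_comp_comm hint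
    simpa [hg] using hcomm.symm
  · rw [intervalIntegral.integral_undef hint, map_zero]

end

theorem markov_coding_projection_invariant_general
    {Y V S : Type*} [TopologicalSpace Y]
    [NormedAddCommGroup V] [NormedSpace ℝ V] [FiniteDimensional ℝ V]
    (ψ : ℝ → Y → Y) (hψcont : Continuous fun p : ℝ × Y => ψ p.1 p.2)
    (σ : S → S) (π : S → Y) (r : S → ℝ)
    (hMarkov : ∀ (x : S) (t : ℝ), ψ (t - r x) (π (σ x)) = ψ t (π x))
    (f : Y → V) (hf : Continuous f)
    (φ : V →ₗ[ℝ] ℝ) (hφf : ∀ y : Y, φ (f y) = 0)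
    (u : V) (hu : φ u = 1)
    (K : S → V)
    (hK : ∀ x : S, K x = r x • u + ∫ s in (0:ℝ)..(r x), f (ψ s (π x)))
    (πbar : S × V → Y × V)
    (hπbar : ∀ (x : S) (v : V), πbar (x, v) =
      (ψ (φ v) (π x),
        v - φ v • u - ∫ s in (0:ℝ)..(φ v), f (ψ s (π x)))) :
    ∀ (x : S) (v : V), πbar (σ x, v - K x) = πbar (x, v) := by
  intro x v
  have horbit : ∀ s, ψ s (π (σ x)) = ψ (s + r x) (π x) := fun s => by
    simpa using hMarkov x (s + r x)
  have hint : ∀ a b : ℝ, IntervalIntegrable (fun s => f (ψ s (π x))) volume a b := fun a b =>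
    (hf.comp (hψcont.comp (continuous_id.prodMk continuous_const))).intervalIntegrable a b
  have hφK : φ (K x) = r x := by
    rw [hK, map_add, map_smul, hu, φ.map_intervalIntegral_eq_zero (fun s => hφf _), smul_eq_mul,
      mul_one, add_zero]
  rw [hπbar, hπbar, map_sub, hφK]
  refine Prod.ext (hMarkov x (φ v)) ?_
  simp only [horbit, intervalIntegral_zero_sub_comp_add_right hint, hK, sub_smul]
  abel

/-- Abstract Markov-coding invariance: given a continuous flow `ψ` on `Y`, data
`(σ, π, r)` with `ψ_{t − r(x)}(π(σ x)) = ψ_t(π x)`, a continuous `f : Y → V`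
with `φ ∘ f = 0` for a linear form `φ`, and `u` with `φ(u) = 1`, the map
`π̲(x, v) = (ψ_{φ(v)}(π x), v − φ(v)·u − ∫₀^{φ(v)} f(ψ_s(π x)) ds)` is invariant
under `(x, v) ↦ (σ x, v − K(x))`, where
`K(x) = r(x)·u + ∫₀^{r(x)} f(ψ_s(π x)) ds`. -/
theorem markov_coding_projection_invariant
    {Y V S : Type*} [TopologicalSpace Y]
    [NormedAddCommGroup V] [NormedSpace ℝ V] [FiniteDimensional ℝ V]
    (ψ : ℝ → Y → Y) (hψcont : Continuous fun p : ℝ × Y => ψ p.1 p.2)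
    (hψ0 : ψ 0 = id) (hψadd : ∀ t s : ℝ, ψ (t + s) = ψ t ∘ ψ s)
    (σ : S → S) (π : S → Y) (r : S → ℝ)
    (hMarkov : ∀ (x : S) (t : ℝ), ψ (t - r x) (π (σ x)) = ψ t (π x))
    (f : Y → V) (hf : Continuous f)
    (φ : V →ₗ[ℝ] ℝ) (hφf : ∀ y : Y, φ (f y) = 0)
    (u : V) (hu : φ u = 1)
    (K : S → V)
    (hK : ∀ x : S, K x = r x • u + ∫ s in (0:ℝ)..(r x), f (ψ s (π x)))
    (πbar : S × V → Y × V)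
    (hπbar : ∀ (x : S) (v : V), πbar (x, v) =
      (ψ (φ v) (π x),
        v - φ v • u - ∫ s in (0:ℝ)..(φ v), f (ψ s (π x)))) :
    ∀ (x : S) (v : V), πbar (σ x, v - K x) = πbar (x, v) :=
  markov_coding_projection_invariant_general ψ hψcont σ π r hMarkov f hf φ hφf u hu K hK πbar hπbar
end
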